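/- arXiv:2512.01494 — 4 statements merged into one kernel-verified Lean document; each statement's English description precedes it below -/
import Mathlib

section
/- Let p, q be finite ℝ^d-valued Radon measures on ℝ^d such that |p+q| = |p| + |q| as measures. Let g : ℝ^d × ℝ^d → [0,∞] be lower semi-continuous, and for each x, convex and positively 1-homogeneous in the second variable. Then ∫ g(x, d(p+q)/d|p+q|(x)) d|p+q|(x) = ∫ g(x, dp/d|p|(x)) d|p|(x) + ∫ g(x, dq/d|q|(x)) d|q|(x). -/
/-!
Let `ν = |p| + |q|` and let `fp, fq` be the densities of `|p|, |q|` with respect to `ν`, so that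
`fp + fq = 1`. Comparing `p + q` on measurable sets gives `ρ = fp • ρp + fq • ρq` `ν`-a.e., a convex
combination of unit vectors which is itself a unit vector. By strict convexity of the Euclidean
ball, `ρ = ρp` wherever `fp > 0`, i.e. `|p|`-a.e., and likewise `ρ = ρq` `|q|`-a.e. The integral
over `|p| + |q|` then splits.
-/

open MeasureTheory

theorem combo_eq_left_of_norm_combo_eq_one {E : Type*} [NormedAddCommGroup E] [NormedSpace ℝ E]
    [StrictConvexSpace ℝ E] {u v : E} {a b : ℝ} (ha : 0 < a) (hb : 0 ≤ b) (hab : a + b = 1)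
    (hu : ‖u‖ ≤ 1) (hv : 0 < b → ‖v‖ ≤ 1) (h : ‖a • u + b • v‖ = 1) : a • u + b • v = u := by
  rcases hb.eq_or_lt with rfl | hb
  · simp [show a = 1 by linarith]
  obtain rfl : u = v := by
    by_contra hne
    exact (norm_combo_lt_of_ne hu (hv hb) hne ha hb hab).ne h
  rw [← add_smul, hab, one_smul]

namespace MeasureTheory.Measure

variable {α : Type*} [MeasurableSpace α]

theorem rnDeriv_add_rnDeriv_eq_one (μ₁ μ₂ : Measure α) [SigmaFinite μ₁] [SigmaFinite μ₂] :
    ∀ᵐ x ∂(μ₁ + μ₂), μ₁.rnDeriv (μ₁ + μ₂) x + μ₂.rnDeriv (μ₁ + μ₂) x = 1 := by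
  filter_upwards [rnDeriv_add' μ₁ μ₂ (μ₁ + μ₂), rnDeriv_self (μ₁ + μ₂)] with x hadd hself
  rw [← hself, hadd, Pi.add_apply]

variable {E : Type*} [NormedAddCommGroup E] [NormedSpace ℝ E]

theorem ae_eq_rnDeriv_smul_add_rnDeriv_smul [CompleteSpace E] {μ₁ μ₂ ν : Measure α} [SigmaFinite μ₁]
    [SigmaFinite μ₂] [SigmaFinite ν] (h₁ : μ₁ ≪ ν) (h₂ : μ₂ ≪ ν) {f f₁ f₂ : α → E}
    (hf : Integrable f ν) (hf₁ : Integrable f₁ μ₁) (hf₂ : Integrable f₂ μ₂)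
    (hsum : ∀ s, MeasurableSet s → ∫ x in s, f x ∂ν = ∫ x in s, f₁ x ∂μ₁ + ∫ x in s, f₂ x ∂μ₂) :
    f =ᵐ[ν] fun x ↦ (μ₁.rnDeriv ν x).toReal • f₁ x + (μ₂.rnDeriv ν x).toReal • f₂ x := by
  have hg₁ := (integrable_rnDeriv_smul_iff h₁).2 hf₁
  have hg₂ := (integrable_rnDeriv_smul_iff h₂).2 hf₂
  refine hf.ae_eq_of_forall_setIntegral_eq _ _ (hg₁.add hg₂) fun s hs _ ↦ ?_
  rw [integral_add hg₁.integrableOn hg₂.integrableOn, setIntegral_rnDeriv_smul h₁ hs,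
    setIntegral_rnDeriv_smul h₂ hs, hsum s hs]

theorem ae_eq_left_of_setIntegral_add_eq [CompleteSpace E] [StrictConvexSpace ℝ E] {μ₁ μ₂ : Measure α}
    [SigmaFinite μ₁] [SigmaFinite μ₂] {f f₁ f₂ : α → E}
    (hf : Integrable f (μ₁ + μ₂)) (hf₁ : Integrable f₁ μ₁) (hf₂ : Integrable f₂ μ₂)
    (hnorm : ∀ᵐ x ∂(μ₁ + μ₂), ‖f x‖ = 1) (hnorm₁ : ∀ᵐ x ∂μ₁, ‖f₁ x‖ ≤ 1)
    (hnorm₂ : ∀ᵐ x ∂μ₂, ‖f₂ x‖ ≤ 1)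
    (hsum : ∀ s, MeasurableSet s →
      ∫ x in s, f x ∂(μ₁ + μ₂) = ∫ x in s, f₁ x ∂μ₁ + ∫ x in s, f₂ x ∂μ₂) :
    f =ᵐ[μ₁] f₁ := by
  set ν := μ₁ + μ₂
  have h₁ : μ₁ ≪ ν := absolutelyContinuous_of_le (Measure.le_add_right le_rfl)
  have h₂ : μ₂ ≪ ν := absolutelyContinuous_of_le (Measure.le_add_left le_rfl)
  have hcombo := ae_eq_rnDeriv_smul_add_rnDeriv_smul h₁ h₂ hf hf₁ hf₂ hsum
  have hone : ∀ᵐ x ∂ν, (μ₁.rnDeriv ν x).toReal + (μ₂.rnDeriv ν x).toReal = 1 := by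
    filter_upwards [rnDeriv_add_rnDeriv_eq_one μ₁ μ₂, rnDeriv_lt_top μ₁ ν,
      rnDeriv_lt_top μ₂ ν] with x hx hx₁ hx₂
    rw [← ENNReal.toReal_add hx₁.ne hx₂.ne, hx, ENNReal.toReal_one]
  have hnorm₂' := ae_rnDeriv_ne_zero_imp_of_ae ν hnorm₂
  filter_upwards [h₁.ae_le hcombo, h₁.ae_le hone, h₁.ae_le hnorm, h₁.ae_le hnorm₂', hnorm₁,
    rnDeriv_pos h₁, h₁.ae_le (rnDeriv_lt_top μ₁ ν)] with x hx hx_one hx_norm hx₂ hx₁ hpos hlt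
  rw [hx] at hx_norm ⊢
  exact combo_eq_left_of_norm_combo_eq_one (ENNReal.toReal_pos hpos.ne' hlt.ne)
    ENNReal.toReal_nonneg hx_one hx₁ (fun hb ↦ hx₂ fun h ↦ by simp [h] at hb) hx_norm

end MeasureTheory.Measure

open MeasureTheory.Measure

theorem stmt1_general {d : ℕ}
    (g : EuclideanSpace ℝ (Fin d) → EuclideanSpace ℝ (Fin d) → ENNReal)
    (μp μq : Measure (EuclideanSpace ℝ (Fin d)))
    [IsFiniteMeasure μp] [IsFiniteMeasure μq]
    (ρp ρq ρ : EuclideanSpace ℝ (Fin d) → EuclideanSpace ℝ (Fin d))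
    (hρpm : Measurable ρp) (hρqm : Measurable ρq) (hρm : Measurable ρ)
    (hρp : ∀ᵐ x ∂μp, ‖ρp x‖ = 1) (hρq : ∀ᵐ x ∂μq, ‖ρq x‖ = 1)
    (hρ : ∀ᵐ x ∂(μp + μq), ‖ρ x‖ = 1)
    (hsum : ∀ E : Set (EuclideanSpace ℝ (Fin d)), MeasurableSet E →
      ∫ x in E, ρ x ∂(μp + μq) = (∫ x in E, ρp x ∂μp) + ∫ x in E, ρq x ∂μq) :
    ∫⁻ x, g x (ρ x) ∂(μp + μq) =
      (∫⁻ x, g x (ρp x) ∂μp) + ∫⁻ x, g x (ρq x) ∂μq := by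
  have integrable {μ : Measure (EuclideanSpace ℝ (Fin d))} [IsFiniteMeasure μ]
      {f : EuclideanSpace ℝ (Fin d) → EuclideanSpace ℝ (Fin d)} (hf : Measurable f)
      (h : ∀ᵐ x ∂μ, ‖f x‖ = 1) : Integrable f μ :=
    .of_bound hf.aestronglyMeasurable 1 (h.mono fun _ hx ↦ hx.le)
  have hp : ρ =ᵐ[μp] ρp := ae_eq_left_of_setIntegral_add_eq (integrable hρm hρ)
    (integrable hρpm hρp) (integrable hρqm hρq) hρ (hρp.mono fun _ h ↦ h.le)
    (hρq.mono fun _ h ↦ h.le) hsum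
  have hq : ρ =ᵐ[μq] ρq := by
    rw [add_comm] at hρ
    refine ae_eq_left_of_setIntegral_add_eq (integrable hρm hρ) (integrable hρqm hρq)
      (integrable hρpm hρp) hρ (hρq.mono fun _ h ↦ h.le) (hρp.mono fun _ h ↦ h.le) fun E hE ↦ ?_
    rw [add_comm μq, hsum E hE, add_comm]
  rw [lintegral_add_measure, lintegral_congr_ae (hp.mono fun x hx ↦ by rw [hx]),
    lintegral_congr_ae (hq.mono fun x hx ↦ by rw [hx])]

/-- Additivity of the convex 1-homogeneous integral functional under a decomposition with
`|p+q| = |p| + |q|`. Here the vector measure `p` is encoded by its total variation `μp`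
together with its unit polar density `ρp` (and similarly for `q` and `p+q`, the latter having
total variation `μp + μq` and unit density `ρ`). Then
`∫ g(x, d(p+q)/d|p+q|) d|p+q| = ∫ g(x, dp/d|p|) d|p| + ∫ g(x, dq/d|q|) d|q|`. -/
theorem stmt1 {d : ℕ}
    (g : EuclideanSpace ℝ (Fin d) → EuclideanSpace ℝ (Fin d) → ENNReal)
    (hlsc : LowerSemicontinuous
      (fun p : EuclideanSpace ℝ (Fin d) × EuclideanSpace ℝ (Fin d) => g p.1 p.2))
    (hconv : ∀ x p q : EuclideanSpace ℝ (Fin d), ∀ a b : ℝ, 0 ≤ a → 0 ≤ b → a + b = 1 →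
      g x (a • p + b • q) ≤ ENNReal.ofReal a * g x p + ENNReal.ofReal b * g x q)
    (hhom : ∀ (x : EuclideanSpace ℝ (Fin d)) (lam : ℝ), 0 < lam → ∀ t,
      g x (lam • t) = ENNReal.ofReal lam * g x t)
    (hzero : ∀ x, g x 0 = 0)
    (μp μq : Measure (EuclideanSpace ℝ (Fin d)))
    [IsFiniteMeasure μp] [IsFiniteMeasure μq]
    (ρp ρq ρ : EuclideanSpace ℝ (Fin d) → EuclideanSpace ℝ (Fin d))
    (hρpm : Measurable ρp) (hρqm : Measurable ρq) (hρm : Measurable ρ)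
    (hρp : ∀ᵐ x ∂μp, ‖ρp x‖ = 1) (hρq : ∀ᵐ x ∂μq, ‖ρq x‖ = 1)
    (hρ : ∀ᵐ x ∂(μp + μq), ‖ρ x‖ = 1)
    (hsum : ∀ E : Set (EuclideanSpace ℝ (Fin d)), MeasurableSet E →
      ∫ x in E, ρ x ∂(μp + μq) = (∫ x in E, ρp x ∂μp) + ∫ x in E, ρq x ∂μq) :
    ∫⁻ x, g x (ρ x) ∂(μp + μq) =
      (∫⁻ x, g x (ρp x) ∂μp) + ∫⁻ x, g x (ρq x) ∂μq :=
  stmt1_general g μp μq ρp ρq ρ hρpm hρqm hρm hρp hρq hρ hsum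
end

section
/- Let p, q be finite ℝ^d-valued Radon measures with |p+q| = |p| + |q|. Then for |p+q|-a.e. x there exists α(x) ∈ [0,1] such that dp/d|p+q|(x) = α(x) · d(p+q)/d|p+q|(x) and dq/d|p+q|(x) = (1−α(x)) · d(p+q)/d|p+q|(x). -/
open MeasureTheory

/-!
Write `μ = |p| + |q|` and `a = d|p|/dμ`, `b = d|q|/dμ`, so that `a + b = 1` holds `μ`-a.e.
The density of `p + q` with respect to `μ` is `a ρp + b ρq = ρ`; since `‖ρp‖ = ‖ρq‖ = ‖ρ‖ = 1`,
this gives `‖a ρp + b ρq‖ = ‖a ρp‖ + ‖b ρq‖`. In the strictly convex space `ℝ^d`, equality in the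
triangle inequality puts `a ρp` and `b ρq` on a common ray, so both are nonnegative multiples of
their sum `ρ`, with coefficients adding up to `1`.
-/

namespace SameRay

variable {E : Type*} [AddCommGroup E] [Module ℝ E]

theorem exists_mem_Icc_eq_smul_add {u v : E} (h : SameRay ℝ u v) :
    ∃ a ∈ Set.Icc (0 : ℝ) 1, u = a • (u + v) ∧ v = (1 - a) • (u + v) := by
  obtain ⟨a, b, ha, hb, hab, hu, hv⟩ := h.exists_eq_smul_add
  obtain rfl : b = 1 - a := by linarith
  exact ⟨a, ⟨ha, by linarith⟩, hu, hv⟩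

end SameRay

namespace MeasureTheory.Measure

variable {α : Type*} [MeasurableSpace α]

theorem ae_norm_toReal_rnDeriv_smul_eq {E : Type*} [NormedAddCommGroup E] [NormedSpace ℝ E]
    {ν μ : Measure α} [SigmaFinite ν] [SigmaFinite μ] {g : α → E} (hg : ∀ᵐ x ∂ν, ‖g x‖ = 1) :
    ∀ᵐ x ∂μ, ‖(ν.rnDeriv μ x).toReal • g x‖ = (ν.rnDeriv μ x).toReal := by
  filter_upwards [ae_rnDeriv_ne_zero_imp_of_ae μ hg] with x hx
  by_cases h0 : ν.rnDeriv μ x = 0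
  · simp [h0]
  · rw [norm_smul, hx h0, mul_one, Real.norm_of_nonneg ENNReal.toReal_nonneg]

theorem ae_toReal_rnDeriv_add_toReal_rnDeriv_eq_one (ν₁ ν₂ : Measure α)
    [SigmaFinite ν₁] [SigmaFinite ν₂] :
    ∀ᵐ x ∂(ν₁ + ν₂),
      (ν₁.rnDeriv (ν₁ + ν₂) x).toReal + (ν₂.rnDeriv (ν₁ + ν₂) x).toReal = 1 := by
  filter_upwards [rnDeriv_self (ν₁ + ν₂), rnDeriv_add' ν₁ ν₂ (ν₁ + ν₂),
    rnDeriv_lt_top ν₁ (ν₁ + ν₂), rnDeriv_lt_top ν₂ (ν₁ + ν₂)] with x hself hadd h₁ h₂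
  rw [← ENNReal.toReal_add h₁.ne h₂.ne, ← Pi.add_apply, ← hadd, hself, ENNReal.toReal_one]

theorem toReal_rnDeriv_smul_add_ae_eq_of_setIntegral_eq {E : Type*} [NormedAddCommGroup E]
    [NormedSpace ℝ E] [CompleteSpace E] {μ ν₁ ν₂ : Measure α}
    [SigmaFinite μ] [SigmaFinite ν₁] [SigmaFinite ν₂]
    (h₁ : ν₁ ≪ μ) (h₂ : ν₂ ≪ μ) {f₁ f₂ g : α → E} (hf₁ : Integrable f₁ ν₁)
    (hf₂ : Integrable f₂ ν₂) (hg : Integrable g μ)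
    (h : ∀ s, MeasurableSet s → ∫ x in s, g x ∂μ = (∫ x in s, f₁ x ∂ν₁) + ∫ x in s, f₂ x ∂ν₂) :
    (fun x ↦ (ν₁.rnDeriv μ x).toReal • f₁ x + (ν₂.rnDeriv μ x).toReal • f₂ x) =ᵐ[μ] g := by
  have hF₁ := (integrable_rnDeriv_smul_iff h₁).mpr hf₁
  have hF₂ := (integrable_rnDeriv_smul_iff h₂).mpr hf₂
  refine ae_eq_of_forall_setIntegral_eq_of_sigmaFinite (fun _ _ _ ↦ (hF₁.add hF₂).integrableOn)
    (fun _ _ _ ↦ hg.integrableOn) fun s hs _ ↦ ?_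
  rw [integral_add hF₁.integrableOn hF₂.integrableOn, setIntegral_rnDeriv_smul h₁ hs,
    setIntegral_rnDeriv_smul h₂ hs, h s hs]

end MeasureTheory.Measure

/-- If `|p+q| = |p| + |q|`, then for `|p+q|`-a.e. `x` there is `α(x) ∈ [0,1]` with
`dp/d|p+q|(x) = α(x) · d(p+q)/d|p+q|(x)` and `dq/d|p+q|(x) = (1-α(x)) · d(p+q)/d|p+q|(x)`.
Here `p` is encoded by its total variation `μp` and unit polar density `ρp` (similarly `q`),
`|p+q| = μp + μq`, `ρ` is the unit density of `p+q`, and the densities of `p`, `q` with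
respect to `|p+q|` are `(dμp/d(μp+μq))·ρp` and `(dμq/d(μp+μq))·ρq`. -/
theorem stmt2 {d : ℕ}
    (μp μq : Measure (EuclideanSpace ℝ (Fin d)))
    [IsFiniteMeasure μp] [IsFiniteMeasure μq]
    (ρp ρq ρ : EuclideanSpace ℝ (Fin d) → EuclideanSpace ℝ (Fin d))
    (hρpm : Measurable ρp) (hρqm : Measurable ρq) (hρm : Measurable ρ)
    (hρp : ∀ᵐ x ∂μp, ‖ρp x‖ = 1) (hρq : ∀ᵐ x ∂μq, ‖ρq x‖ = 1)
    (hρ : ∀ᵐ x ∂(μp + μq), ‖ρ x‖ = 1)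
    (hsum : ∀ E : Set (EuclideanSpace ℝ (Fin d)), MeasurableSet E →
      ∫ x in E, ρ x ∂(μp + μq) = (∫ x in E, ρp x ∂μp) + ∫ x in E, ρq x ∂μq) :
    ∀ᵐ x ∂(μp + μq), ∃ α : ℝ, α ∈ Set.Icc (0 : ℝ) 1 ∧
      (μp.rnDeriv (μp + μq) x).toReal • ρp x = α • ρ x ∧
      (μq.rnDeriv (μp + μq) x).toReal • ρq x = (1 - α) • ρ x := by
  have hdensity := Measure.toReal_rnDeriv_smul_add_ae_eq_of_setIntegral_eq
    (Measure.AbsolutelyContinuous.rfl.add_right μq)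
    (Measure.AbsolutelyContinuous.rfl.add_right' μp)
    (.of_bound hρpm.aestronglyMeasurable 1 (hρp.mono fun _ h ↦ h.le))
    (.of_bound hρqm.aestronglyMeasurable 1 (hρq.mono fun _ h ↦ h.le))
    (.of_bound hρm.aestronglyMeasurable 1 (hρ.mono fun _ h ↦ h.le)) hsum
  filter_upwards [hdensity, Measure.ae_toReal_rnDeriv_add_toReal_rnDeriv_eq_one μp μq, hρ,
    Measure.ae_norm_toReal_rnDeriv_smul_eq hρp, Measure.ae_norm_toReal_rnDeriv_smul_eq hρq]
    with x hx hone hρx hpx hqx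
  have hray := sameRay_iff_norm_add.mpr (by rw [hx, hρx, hpx, hqx, hone])
  obtain ⟨α, hα, hp, hq⟩ := hray.exists_mem_Icc_eq_smul_add
  rw [hx] at hp hq
  exact ⟨α, hα, hp, hq⟩
end

section
/- Let f₂(t) = √(1 + α²t²) with α > 0. Then its convex conjugate satisfies f₂*(b) = −√(1 − b²/α²) for |b| ≤ α and f₂*(b) = +∞ for |b| > α. Consequently the set {(a,b) ∈ ℝ² : f₂*(b) + a ≤ 0} equals {(a,b) : max(0,a)² + (b/α)² ≤ 1}. -/
/-!
Substituting `u = α t` reduces everything to `φ(u) = √(1 + u²)` at the slope `c = b / α`.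
For `|c| ≤ 1`, Cauchy–Schwarz in `ℝ²` applied to `(c, √(1 - c²))` and `(u, 1)` gives
`c u - φ(u) ≤ -√(1 - c²)`, with equality at `u = c / √(1 - c²)` when `|c| < 1`;
when `|c| = 1` the bound is only approached as `u → ±∞`. For `|c| > 1`, `φ(u) ≤ 1 + |u|`
makes `c u - φ(u)` unbounded along `u = c w`, `w → ∞`.
-/

open Real

noncomputable def convexConjugate (f : ℝ → ℝ) (b : ℝ) : EReal :=
  ⨆ t : ℝ, ((b * t - f t : ℝ) : EReal)

theorem convexConjugate_comp_mul (g : ℝ → ℝ) {α : ℝ} (hα : α ≠ 0) (b : ℝ) :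
    convexConjugate (fun t => g (α * t)) b = convexConjugate g (b / α) := by
  unfold convexConjugate
  conv_rhs => rw [← (mulLeft_bijective₀ α hα).surjective.iSup_comp]
  refine iSup_congr fun t => ?_
  rw [← mul_assoc, div_mul_cancel₀ b hα]

theorem mul_add_sqrt_one_sub_sq_le {c : ℝ} (hc : |c| ≤ 1) (u : ℝ) :
    c * u + √(1 - c ^ 2) ≤ √(1 + u ^ 2) := by
  have hs : √(1 - c ^ 2) ^ 2 = 1 - c ^ 2 :=
    sq_sqrt (sub_nonneg.2 ((sq_le_one_iff_abs_le_one c).2 hc))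
  refine (le_abs_self _).trans (abs_le_sqrt ?_)
  -- Lagrange's identity `(c² + s²)(u² + 1) - (c u + s)² = (c - s u)²` with `s = √(1 - c²)`
  nlinarith [sq_nonneg (c - √(1 - c ^ 2) * u)]

theorem mul_sub_sqrt_one_add_sq_eq {c : ℝ} (hc : |c| < 1) :
    c * (c / √(1 - c ^ 2)) - √(1 + (c / √(1 - c ^ 2)) ^ 2) = -√(1 - c ^ 2) := by
  have hc2 : 0 < 1 - c ^ 2 := sub_pos.2 ((sq_lt_one_iff_abs_lt_one c).2 hc)
  set s := √(1 - c ^ 2)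
  have hs : 0 < s := sqrt_pos.2 hc2
  have hs2 : s ^ 2 = 1 - c ^ 2 := sq_sqrt hc2.le
  have hsqrt : √(1 + (c / s) ^ 2) = 1 / s := by
    rw [show 1 + (c / s) ^ 2 = (1 / s) ^ 2 by field_simp; linarith, sqrt_sq (by positivity)]
  rw [hsqrt]
  field_simp
  linarith

theorem exists_lt_mul_sub_sqrt_one_add_sq {c r : ℝ} (hc : |c| ≤ 1) (hr : r < -√(1 - c ^ 2)) :
    ∃ u, r < c * u - √(1 + u ^ 2) := by
  rcases hc.lt_or_eq with hc | hc
  · exact ⟨_, (mul_sub_sqrt_one_add_sq_eq hc).symm ▸ hr⟩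
  · have hc2 : c ^ 2 = 1 := by rw [← sq_abs, hc, one_pow]
    have hr0 : r < 0 := by simpa [hc2] using hr
    -- along `u = c v` with `v = -1/r` one has `c u - √(1 + u²) ≥ -1/(2v) = r/2`
    refine ⟨c * (-1 / r), ?_⟩
    have hv : -1 / r * r = -1 := div_mul_cancel₀ _ hr0.ne
    rw [mul_pow, hc2, one_mul, ← mul_assoc, ← sq, hc2, one_mul, lt_sub_comm,
      sqrt_lt' (by nlinarith)]
    nlinarith

theorem exists_lt_mul_sub_sqrt_one_add_sq_of_one_lt_abs {c : ℝ} (hc : 1 < |c|) (r : ℝ) :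
    ∃ u, r < c * u - √(1 + u ^ 2) := by
  have hk : 0 < |c| * (|c| - 1) := mul_pos (by linarith) (by linarith)
  set w := (|r| + 2) / (|c| * (|c| - 1))
  have hw : 0 ≤ w := by positivity
  have hkw : |c| * (|c| - 1) * w = |r| + 2 := mul_div_cancel₀ _ hk.ne'
  have hsqrt : √(1 + (c * w) ^ 2) ≤ 1 + |c| * w := by
    rw [sqrt_le_left (by positivity), mul_pow, ← sq_abs c]
    nlinarith
  refine ⟨c * w, ?_⟩
  rw [← mul_assoc, ← sq, ← sq_abs c]
  nlinarith [le_abs_self r]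

theorem convexConjugate_sqrt_one_add_sq_of_abs_le {c : ℝ} (hc : |c| ≤ 1) :
    convexConjugate (fun u => √(1 + u ^ 2)) c = ((-√(1 - c ^ 2) : ℝ) : EReal) := by
  refine le_antisymm (iSup_le fun u => EReal.coe_le_coe_iff.2 ?_)
    (EReal.ge_of_forall_gt_iff_ge.1 fun r hr => ?_)
  · linarith [mul_add_sqrt_one_sub_sq_le hc u]
  · obtain ⟨u, hu⟩ := exists_lt_mul_sub_sqrt_one_add_sq hc (EReal.coe_lt_coe_iff.1 hr)
    exact le_iSup_of_le u (EReal.coe_le_coe_iff.2 hu.le)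

theorem convexConjugate_sqrt_one_add_sq_of_one_lt_abs {c : ℝ} (hc : 1 < |c|) :
    convexConjugate (fun u => √(1 + u ^ 2)) c = ⊤ := by
  refine (EReal.eq_top_iff_forall_lt _).2 fun r => ?_
  obtain ⟨u, hu⟩ := exists_lt_mul_sub_sqrt_one_add_sq_of_one_lt_abs hc r
  exact lt_iSup_iff.2 ⟨u, EReal.coe_lt_coe_iff.2 hu⟩

theorem convexConjugate_sqrt_one_add_sq_add_le_zero_iff (a c : ℝ) :
    convexConjugate (fun u => √(1 + u ^ 2)) c + a ≤ 0 ↔ max 0 a ^ 2 + c ^ 2 ≤ 1 := by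
  rcases le_or_gt |c| 1 with hc | hc
  · have hc2 : 0 ≤ 1 - c ^ 2 := sub_nonneg.2 ((sq_le_one_iff_abs_le_one c).2 hc)
    rw [convexConjugate_sqrt_one_add_sq_of_abs_le hc, ← EReal.coe_add, ← EReal.coe_zero,
      EReal.coe_le_coe_iff, neg_add_nonpos_iff, ← le_sub_iff_add_le,
      ← le_sqrt (le_max_left _ _) hc2, max_le_iff, and_iff_right (sqrt_nonneg _)]
  · rw [convexConjugate_sqrt_one_add_sq_of_one_lt_abs hc, EReal.top_add_coe]
    have hc2 := (one_lt_sq_iff_one_lt_abs c).2 hc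
    exact iff_of_false (fun h => EReal.zero_ne_top (top_le_iff.1 h))
      (by nlinarith [sq_nonneg (max 0 a)])

/-- For `f₂(t) = √(1 + α²t²)` with `α > 0`, the convex conjugate satisfies
`f₂*(b) = -√(1 - b²/α²)` for `|b| ≤ α` and `+∞` for `|b| > α`; consequently
`{(a,b) : f₂*(b) + a ≤ 0} = {(a,b) : max(0,a)² + (b/α)² ≤ 1}`. -/
theorem stmt7 (α : ℝ) (hα : 0 < α) (f : ℝ → ℝ)
    (hf : ∀ t, f t = Real.sqrt (1 + α ^ 2 * t ^ 2))
    (fstar : ℝ → EReal)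
    (hfstar : ∀ b : ℝ, fstar b = ⨆ t : ℝ, ((b * t - f t : ℝ) : EReal)) :
    (∀ b : ℝ, |b| ≤ α → fstar b = ((-Real.sqrt (1 - b ^ 2 / α ^ 2) : ℝ) : EReal)) ∧
    (∀ b : ℝ, α < |b| → fstar b = ⊤) ∧
    {p : ℝ × ℝ | fstar p.2 + (p.1 : EReal) ≤ 0} =
      {p : ℝ × ℝ | (max 0 p.1) ^ 2 + (p.2 / α) ^ 2 ≤ 1} := by
  have hfstar' (b : ℝ) : fstar b = convexConjugate (fun u => √(1 + u ^ 2)) (b / α) := by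
    rw [hfstar, ← convexConjugate_comp_mul _ hα.ne']
    simp only [convexConjugate, hf, mul_pow]
  have habs (b : ℝ) : |b / α| = |b| / α := by rw [abs_div, abs_of_pos hα]
  refine ⟨fun b hb => ?_, fun b hb => ?_, ?_⟩
  · rw [hfstar', convexConjugate_sqrt_one_add_sq_of_abs_le, div_pow]
    rwa [habs, div_le_one hα]
  · rw [hfstar', convexConjugate_sqrt_one_add_sq_of_one_lt_abs]
    rwa [habs, one_lt_div hα]
  · ext ⟨a, b⟩
    simp only [Set.mem_ofPred_eq, hfstar', convexConjugate_sqrt_one_add_sq_add_le_zero_iff]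
end

section
/- Let γ : [a,b] → ℝ^d be an injective Lipschitz curve with |γ'(t)| = 1 for a.e. t. Then the induced vector measure z_γ satisfies |z_γ| = H¹ ⌞ (Im γ), the 1-dimensional Hausdorff measure restricted to the image of γ, and z_γ = τ · H¹ ⌞ (Im γ) where τ(γ(t)) = γ'(t) is the unit tangent. -/
/-!
Testing the derivative of `γ` against a norming functional shows that a unit-speed Lipschitz
curve is `1`-Lipschitz, so `H¹(γ(S)) ≤ |S|` for every `S ⊆ [a, b]`. Conversely, for an injective
curve the arc length `F t = H¹(γ([a, t]))` is additive, hence `1`-Lipschitz with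
`F t - F s ≥ |γ t - γ s|`; comparing slopes gives `F' ≥ |γ'| = 1` a.e., and the fundamental
theorem of calculus for the absolutely continuous `F` gives `H¹(γ([a, b])) ≥ b - a`. A measure
dominated by a finite measure of the same total mass equals it, so `H¹ ⌞ γ([a, b])` is the
push-forward of Lebesgue measure on `[a, b]` under `γ`. Since `γ` is a measurable embedding of
`[a, b]`, integrals against this push-forward are integrals along the curve, and the tangent
`τ = γ' ∘ γ⁻¹` needs no measurability.
-/

open MeasureTheory RealInnerProductSpace
open Set Filter Topology
open scoped ENNReal NNReal

namespace AbsolutelyContinuousOnInterval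

variable {f : ℝ → ℝ} {a b c : ℝ}

theorem mul_sub_le_sub_of_le_deriv (hab : a ≤ b) (hf : AbsolutelyContinuousOnInterval f a b)
    (h : ∀ᵐ x ∂volume.restrict (Icc a b), c ≤ deriv f x) :
    c * (b - a) ≤ f b - f a :=
  calc c * (b - a) = ∫ _ in a..b, c := by simp [mul_comm]
    _ ≤ ∫ x in a..b, deriv f x :=
      intervalIntegral.integral_mono_ae_restrict hab intervalIntegrable_const
        hf.intervalIntegrable_deriv h
    _ = f b - f a := hf.integral_deriv_eq_sub

theorem sub_le_mul_sub_of_deriv_le (hab : a ≤ b) (hf : AbsolutelyContinuousOnInterval f a b)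
    (h : ∀ᵐ x ∂volume.restrict (Icc a b), deriv f x ≤ c) :
    f b - f a ≤ c * (b - a) := by
  have := hf.neg.mul_sub_le_sub_of_le_deriv (c := -c) hab
    (h.mono fun x hx => by simpa [deriv.neg'] using hx)
  simp only [Pi.neg_apply] at this
  linarith

end AbsolutelyContinuousOnInterval

theorem lipschitzOnWith_one_of_dist_le_sub {X : Type*} [PseudoMetricSpace X] {f : ℝ → X}
    {S : Set ℝ} (h : ∀ s ∈ S, ∀ t ∈ S, s ≤ t → dist (f s) (f t) ≤ t - s) :
    LipschitzOnWith 1 f S := by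
  refine LipschitzOnWith.mk_one fun s hs t ht => ?_
  rcases le_total s t with hst | hts
  · simpa [Real.dist_eq, abs_of_nonpos (sub_nonpos.2 hst)] using h s hs t ht hst
  · simpa [dist_comm, Real.dist_eq, abs_of_nonneg (sub_nonneg.2 hts)] using h t ht s hs hts

section

variable {E : Type*} [NormedAddCommGroup E] [NormedSpace ℝ E]

theorem LipschitzOnWith.lipschitzOnWith_one_of_ae_norm_deriv_le_one {γ γ' : ℝ → E} {a b : ℝ}
    {K : ℝ≥0} (hlip : LipschitzOnWith K γ (Icc a b))
    (hderiv : ∀ᵐ t ∂volume.restrict (Icc a b), HasDerivAt γ (γ' t) t ∧ ‖γ' t‖ ≤ 1) :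
    LipschitzOnWith 1 γ (Icc a b) := by
  refine lipschitzOnWith_one_of_dist_le_sub fun s hs t ht hst => ?_
  obtain ⟨g, hg, hgv⟩ := exists_dual_vector'' ℝ (γ t - γ s)
  have hsub : Icc s t ⊆ Icc a b := Icc_subset_Icc hs.1 ht.2
  have hac : AbsolutelyContinuousOnInterval (g ∘ γ) s t :=
    (g.lipschitz.comp_lipschitzOnWith
      (hlip.mono (uIcc_of_le hst ▸ hsub))).absolutelyContinuousOnInterval
  have hderiv_le : ∀ᵐ x ∂volume.restrict (Icc s t), deriv (g ∘ γ) x ≤ 1 := by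
    filter_upwards [ae_restrict_of_ae_restrict_of_subset hsub hderiv] with x hx
    rw [(g.hasFDerivAt.comp_hasDerivAt x hx.1).deriv]
    calc g (γ' x) ≤ ‖g‖ * ‖γ' x‖ := (le_abs_self _).trans (g.le_opNorm _)
      _ ≤ 1 * 1 := by gcongr; exact hx.2
      _ = 1 := one_mul 1
  have := hac.sub_le_mul_sub_of_deriv_le hst hderiv_le
  simp only [Function.comp_apply, ← map_sub, hgv, one_mul] at this
  rwa [dist_eq_norm']

end

theorem HasDerivAt.norm_le_of_norm_slope_le {E : Type*} [NormedAddCommGroup E]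
    [NormedSpace ℝ E] {f : ℝ → E} {F : ℝ → ℝ} {f' : E} {F' x : ℝ} (hf : HasDerivAt f f' x)
    (hF : HasDerivAt F F' x) (h : ∀ᶠ y in 𝓝[≠] x, ‖slope f x y‖ ≤ slope F x y) :
    ‖f'‖ ≤ F' :=
  le_of_tendsto_of_tendsto (hasDerivAt_iff_tendsto_slope.1 hf).norm
    (hasDerivAt_iff_tendsto_slope.1 hF) h

theorem LipschitzOnWith.hausdorffMeasure_one_image_le_volume {X : Type*} [EMetricSpace X]
    [MeasurableSpace X] [BorelSpace X] {f : ℝ → X} {s : Set ℝ} (hf : LipschitzOnWith 1 f s) :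
    μH[1] (f '' s) ≤ volume s := by
  simpa [hausdorffMeasure_real] using hf.hausdorffMeasure_image_le zero_le_one

section

variable {X : Type*} [MetricSpace X] [MeasurableSpace X] [BorelSpace X]

theorem ofReal_dist_le_hausdorffMeasure_image_Icc {f : ℝ → X} {a b : ℝ} (hab : a ≤ b)
    (hf : ContinuousOn f (Icc a b)) :
    ENNReal.ofReal (dist (f a) (f b)) ≤ μH[1] (f '' Icc a b) := by
  have hp : LipschitzWith 1 (dist (f a)) := LipschitzWith.dist_right (f a)
  have hivt : Icc 0 (dist (f a) (f b)) ⊆ dist (f a) '' (f '' Icc a b) := by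
    rw [← image_comp]
    simpa using intermediate_value_Icc hab (hp.continuous.comp_continuousOn hf)
  calc ENNReal.ofReal (dist (f a) (f b)) = μH[1] (Icc 0 (dist (f a) (f b))) := by
        rw [hausdorffMeasure_real, Real.volume_Icc, sub_zero]
    _ ≤ μH[1] (dist (f a) '' (f '' Icc a b)) := measure_mono hivt
    _ ≤ μH[1] (f '' Icc a b) := by
        simpa using hp.hausdorffMeasure_image_le zero_le_one (f '' Icc a b)

theorem hausdorffMeasure_image_Icc_add {f : ℝ → X} {a b c : ℝ} (hab : a ≤ b) (hbc : b ≤ c)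
    (hf : LipschitzOnWith 1 f (Icc a c)) (hinj : InjOn f (Icc a c)) :
    μH[1] (f '' Icc a c) = μH[1] (f '' Icc a b) + μH[1] (f '' Icc b c) := by
  have hinter : f '' Icc a b ∩ f '' Icc b c = f '' Icc b b := by
    rw [← hinj.image_inter (Icc_subset_Icc_right hbc) (Icc_subset_Icc_left hab),
      Icc_inter_Icc, max_eq_right hab, min_eq_left hbc]
  have hnull : μH[1] (f '' Icc a b ∩ f '' Icc b c) = 0 := by
    have := (hf.mono (Icc_subset_Icc hab hbc)).hausdorffMeasure_one_image_le_volume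
    rw [hinter]
    simpa using this
  have hmeas : NullMeasurableSet (f '' Icc b c) μH[1] :=
    (isCompact_Icc.image_of_continuousOn
      (hf.continuousOn.mono (Icc_subset_Icc hab le_rfl))).measurableSet.nullMeasurableSet
  rw [← measure_union₀ hmeas hnull, ← image_union, Icc_union_Icc_eq_Icc hab hbc]

noncomputable def arcLength (f : ℝ → X) (a t : ℝ) : ℝ := (μH[1] (f '' Icc a t)).toReal

variable {f : ℝ → X} {a b : ℝ}

theorem arcLength_sub_arcLength (hf : LipschitzOnWith 1 f (Icc a b)) (hinj : InjOn f (Icc a b))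
    {s t : ℝ} (hs : s ∈ Icc a b) (ht : t ∈ Icc a b) (hst : s ≤ t) :
    arcLength f a t - arcLength f a s = (μH[1] (f '' Icc s t)).toReal := by
  have hfin {u v : ℝ} (huv : Icc u v ⊆ Icc a b) : μH[1] (f '' Icc u v) ≠ ∞ :=
    ((hf.mono huv).hausdorffMeasure_one_image_le_volume.trans_lt measure_Icc_lt_top).ne
  have hsub : Icc a t ⊆ Icc a b := Icc_subset_Icc_right ht.2
  rw [arcLength, arcLength, hausdorffMeasure_image_Icc_add hs.1 hst (hf.mono hsub)
    (hinj.mono hsub), ENNReal.toReal_add (hfin (Icc_subset_Icc_right (hst.trans ht.2)))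
    (hfin (Icc_subset_Icc hs.1 ht.2)), add_sub_cancel_left]

theorem dist_le_arcLength_sub_le (hf : LipschitzOnWith 1 f (Icc a b)) (hinj : InjOn f (Icc a b))
    {s t : ℝ} (hs : s ∈ Icc a b) (ht : t ∈ Icc a b) (hst : s ≤ t) :
    dist (f s) (f t) ≤ arcLength f a t - arcLength f a s ∧
      arcLength f a t - arcLength f a s ≤ t - s := by
  have hsub : Icc s t ⊆ Icc a b := Icc_subset_Icc hs.1 ht.2
  have hupper := (hf.mono hsub).hausdorffMeasure_one_image_le_volume
  rw [Real.volume_Icc] at hupper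
  rw [arcLength_sub_arcLength hf hinj hs ht hst]
  exact ⟨(ENNReal.ofReal_le_iff_le_toReal (ne_top_of_le_ne_top ENNReal.ofReal_ne_top hupper)).1
      (ofReal_dist_le_hausdorffMeasure_image_Icc hst (hf.continuousOn.mono hsub)),
    ENNReal.toReal_le_of_le_ofReal (sub_nonneg.2 hst) hupper⟩

theorem lipschitzOnWith_arcLength (hf : LipschitzOnWith 1 f (Icc a b))
    (hinj : InjOn f (Icc a b)) : LipschitzOnWith 1 (arcLength f a) (Icc a b) := by
  refine lipschitzOnWith_one_of_dist_le_sub fun s hs t ht hst => ?_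
  obtain ⟨hlow, hup⟩ := dist_le_arcLength_sub_le hf hinj hs ht hst
  rwa [Real.dist_eq, abs_sub_comm, abs_of_nonneg (dist_nonneg.trans hlow)]

theorem absolutelyContinuousOnInterval_arcLength (hab : a ≤ b)
    (hf : LipschitzOnWith 1 f (Icc a b)) (hinj : InjOn f (Icc a b)) :
    AbsolutelyContinuousOnInterval (arcLength f a) a b :=
  (uIcc_of_le hab ▸ lipschitzOnWith_arcLength hf hinj).absolutelyContinuousOnInterval

end

section

variable {E : Type*} [NormedAddCommGroup E] [NormedSpace ℝ E] [MeasurableSpace E] [BorelSpace E]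
  {f f' : ℝ → E} {a b : ℝ}

theorem norm_slope_le_slope_arcLength (hf : LipschitzOnWith 1 f (Icc a b))
    (hinj : InjOn f (Icc a b)) {x y : ℝ} (hx : x ∈ Icc a b) (hy : y ∈ Icc a b) :
    ‖slope f x y‖ ≤ slope (arcLength f a) x y := by
  wlog hxy : x ≤ y generalizing x y
  · rw [slope_comm, slope_comm (arcLength f a)]; exact this hy hx (le_of_not_ge hxy)
  have hdist := (dist_le_arcLength_sub_le hf hinj hx hy hxy).1
  rw [slope_def_module, slope_def_field, norm_smul, norm_inv,
    Real.norm_of_nonneg (sub_nonneg.2 hxy), ← dist_eq_norm, dist_comm, inv_mul_eq_div]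
  gcongr

theorem one_le_deriv_arcLength (hab : a ≤ b) (hf : LipschitzOnWith 1 f (Icc a b))
    (hinj : InjOn f (Icc a b))
    (hderiv : ∀ᵐ t ∂volume.restrict (Icc a b), HasDerivAt f (f' t) t ∧ ‖f' t‖ = 1) :
    ∀ᵐ x ∂volume.restrict (Icc a b), 1 ≤ deriv (arcLength f a) x := by
  have hIoo : ∀ᵐ x ∂volume.restrict (Icc a b), x ∈ Ioo a b := by
    rw [← Measure.restrict_congr_set Ioo_ae_eq_Icc]
    exact ae_restrict_mem measurableSet_Ioo
  have hdiff : ∀ᵐ x ∂volume.restrict (Icc a b), DifferentiableAt ℝ (arcLength f a) x := by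
    rw [ae_restrict_iff' measurableSet_Icc, ← uIcc_of_le hab]
    exact (absolutelyContinuousOnInterval_arcLength hab hf hinj).ae_differentiableAt
  filter_upwards [hIoo, hdiff, hderiv] with x hx hFx ⟨hfx, hnorm⟩
  rw [← hnorm]
  refine hfx.norm_le_of_norm_slope_le hFx.hasDerivAt ?_
  filter_upwards [nhdsWithin_le_nhds (Ioo_mem_nhds hx.1 hx.2)] with y hy
  exact norm_slope_le_slope_arcLength hf hinj (Ioo_subset_Icc_self hx) (Ioo_subset_Icc_self hy)

theorem hausdorffMeasure_image_Icc_eq_ofReal_sub (hab : a ≤ b)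
    (hf : LipschitzOnWith 1 f (Icc a b)) (hinj : InjOn f (Icc a b))
    (hderiv : ∀ᵐ t ∂volume.restrict (Icc a b), HasDerivAt f (f' t) t ∧ ‖f' t‖ = 1) :
    μH[1] (f '' Icc a b) = ENNReal.ofReal (b - a) := by
  have hupper : μH[1] (f '' Icc a b) ≤ ENNReal.ofReal (b - a) :=
    Real.volume_Icc ▸ hf.hausdorffMeasure_one_image_le_volume
  have hlower : 1 * (b - a) ≤ arcLength f a b - arcLength f a a :=
    (absolutelyContinuousOnInterval_arcLength hab hf hinj).mul_sub_le_sub_of_le_deriv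
      hab (one_le_deriv_arcLength hab hf hinj hderiv)
  have hzero : arcLength f a a = 0 := by
    have := (hf.mono (Icc_subset_Icc le_rfl hab)).hausdorffMeasure_one_image_le_volume
    simp only [Icc_self, image_singleton, Real.volume_singleton, nonpos_iff_eq_zero] at this
    simp [arcLength, this]
  refine le_antisymm hupper ?_
  rw [ENNReal.ofReal_le_iff_le_toReal (ne_top_of_le_ne_top ENNReal.ofReal_ne_top hupper)]
  rwa [hzero, one_mul, sub_zero, arcLength] at hlower

end

theorem hausdorffMeasure_restrict_image_eq_map {X : Type*} [EMetricSpace X]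
    [MeasurableSpace X] [BorelSpace X] {f : ℝ → X} {a b : ℝ} (hf : LipschitzOnWith 1 f (Icc a b))
    (htot : μH[1] (f '' Icc a b) = ENNReal.ofReal (b - a)) :
    μH[1].restrict (f '' Icc a b) = (volume.restrict (Icc a b)).map f := by
  have : IsFiniteMeasure (μH[1].restrict (f '' Icc a b)) :=
    isFiniteMeasure_restrict.2 (htot ▸ ENNReal.ofReal_ne_top)
  have hmeas : AEMeasurable f (volume.restrict (Icc a b)) :=
    hf.continuousOn.aemeasurable measurableSet_Icc
  refine Measure.eq_of_le_of_measure_univ_eq (Measure.le_iff.2 fun s hs => ?_) ?_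
  · rw [Measure.restrict_apply hs, Measure.map_apply_of_aemeasurable hmeas hs,
      Measure.restrict_apply' measurableSet_Icc, ← image_preimage_inter]
    exact (hf.mono inter_subset_right).hausdorffMeasure_one_image_le_volume
  · rw [Measure.restrict_apply_univ, htot, Measure.map_apply_of_aemeasurable hmeas .univ,
      preimage_univ, Measure.restrict_apply_univ, Real.volume_Icc]

theorem IsCompact.integral_map_restrict_of_injOn {α Y G : Type*} [TopologicalSpace α]
    [T2Space α] [MeasurableSpace α] [BorelSpace α] [TopologicalSpace Y] [T2Space Y]
    [MeasurableSpace Y] [BorelSpace Y] [NormedAddCommGroup G] [NormedSpace ℝ G]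
    {μ : Measure α} {s : Set α} {f : α → Y} (hs : IsCompact s) (hf : ContinuousOn f s)
    (hinj : InjOn f s) (g : Y → G) :
    ∫ y, g y ∂(μ.restrict s).map f = ∫ x in s, g (f x) ∂μ := by
  have := isCompact_iff_compactSpace.1 hs
  have he : MeasurableEmbedding (s.domRestrict f) :=
    (hf.domRestrict.isClosedEmbedding hinj.injective).measurableEmbedding
  have hmap : (μ.restrict s).map f = (μ.comap Subtype.val).map (s.domRestrict f) := by
    rw [← map_comap_subtype_coe hs.measurableSet, AEMeasurable.map_map_of_aemeasurable
      ((map_comap_subtype_coe hs.measurableSet μ).symm ▸ hf.aemeasurable hs.measurableSet)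
      measurable_subtype_coe.aemeasurable]
    rfl
  rw [hmap, he.integral_map]
  exact integral_subtype_comap hs.measurableSet (fun x => g (f x))

/-- For an injective arclength-parametrized Lipschitz curve `γ : [a,b] → ℝ^d`, the induced
vector measure `z_γ` satisfies `|z_γ| = H¹ ⌞ Im γ` and `z_γ = τ · H¹ ⌞ Im γ` for the unit
tangent field `τ` with `τ(γ(t)) = γ'(t)`, both equalities tested against continuous
compactly supported functions. -/
theorem stmt15 {d : ℕ} (a b : ℝ) (hab : a ≤ b)
    (γ γ' : ℝ → EuclideanSpace ℝ (Fin d)) (K : NNReal)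
    (hlip : LipschitzOnWith K γ (Set.Icc a b))
    (hinj : Set.InjOn γ (Set.Icc a b))
    (hderiv : ∀ᵐ t ∂(volume.restrict (Set.Icc a b)),
      HasDerivAt γ (γ' t) t ∧ ‖γ' t‖ = 1) :
    ∃ τ : EuclideanSpace ℝ (Fin d) → EuclideanSpace ℝ (Fin d),
      (∀ᵐ t ∂(volume.restrict (Set.Icc a b)), τ (γ t) = γ' t) ∧
      (∀ φ : EuclideanSpace ℝ (Fin d) → ℝ, Continuous φ → HasCompactSupport φ →
        ∫ t in a..b, φ (γ t) =
          ∫ x, φ x ∂((Measure.hausdorffMeasure 1 :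
            Measure (EuclideanSpace ℝ (Fin d))).restrict (γ '' Set.Icc a b))) ∧
      (∀ φ : EuclideanSpace ℝ (Fin d) → EuclideanSpace ℝ (Fin d),
        Continuous φ → HasCompactSupport φ →
        ∫ t in a..b, ⟪φ (γ t), γ' t⟫ =
          ∫ x, ⟪φ x, τ x⟫ ∂((Measure.hausdorffMeasure 1 :
            Measure (EuclideanSpace ℝ (Fin d))).restrict (γ '' Set.Icc a b))) := by
  have hγ : LipschitzOnWith 1 γ (Icc a b) :=
    hlip.lipschitzOnWith_one_of_ae_norm_deriv_le_one (hderiv.mono fun _ ht => ⟨ht.1, ht.2.le⟩)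
  have hμ := hausdorffMeasure_restrict_image_eq_map hγ
    (hausdorffMeasure_image_Icc_eq_ofReal_sub hab hγ hinj hderiv)
  have hτ : ∀ t ∈ Icc a b, γ' (Function.invFunOn γ (Icc a b) (γ t)) = γ' t := fun t ht => by
    rw [hinj.leftInvOn_invFunOn ht]
  refine ⟨fun x => γ' (Function.invFunOn γ (Icc a b) x),
    ae_restrict_of_forall_mem measurableSet_Icc hτ, fun φ _ _ => ?_, fun φ _ _ => ?_⟩ <;>
  rw [hμ, isCompact_Icc.integral_map_restrict_of_injOn hγ.continuousOn hinj,
    intervalIntegral.integral_of_le hab, ← integral_Icc_eq_integral_Ioc]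
  exact setIntegral_congr_fun measurableSet_Icc fun t ht => by simp only [hτ t ht]
end
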